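/- If G is a subgroup of PL₊(I) whose depth (supremum of heights of towers of G) equals n for a positive integer n, then the derived subgroup G' has depth exactly n−1. -/

import Mathlib

/-- The support of a map of the line: points it moves. -/
def Supp (f : ℝ → ℝ) : Set ℝ := {x | f x ≠ x}

/-- `A` is an orbital of `f`: a connected component of the support of `f`. -/
def IsOrbital (f : ℝ → ℝ) (A : Set ℝ) : Prop :=
  ∃ x ∈ Supp f, A = connectedComponentIn (Supp f) x

/-- An orientation-preserving homeomorphism of `[0,1]`, encoded as a strictly
increasing bijection of `ℝ` fixing every point outside `(0,1)`. -/
def Homeo01 (f : Equiv.Perm ℝ) : Prop :=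
  StrictMono f ∧ ∀ x ∉ Set.Ioo (0:ℝ) 1, f x = x

/-- `f` is affine in a neighbourhood of `x`. -/
def LocallyAffineAt (f : ℝ → ℝ) (x : ℝ) : Prop :=
  ∃ ε > 0, ∃ m b : ℝ, ∀ y : ℝ, |y - x| < ε → f y = m * y + b

/-- Piecewise linear with finitely many breakpoints. -/
def IsPL (f : ℝ → ℝ) : Prop := {x | ¬ LocallyAffineAt f x}.Finite

/-- Membership in `PL₊(I)`. -/
def PLHomeo (f : Equiv.Perm ℝ) : Prop := Homeo01 f ∧ IsPL f

/-- Support of the action of a subgroup. -/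
def GSupp (G : Subgroup (Equiv.Perm ℝ)) : Set ℝ := {x | ∃ g ∈ G, g x ≠ x}

/-- An orbital of a subgroup: a component of the support of its action. -/
def IsGroupOrbital (G : Subgroup (Equiv.Perm ℝ)) (A : Set ℝ) : Prop :=
  ∃ x ∈ GSupp G, A = connectedComponentIn (GSupp G) x

/-- `b` is a breakpoint of `f`: one-sided derivatives exist but differ. -/
def Breakpoint (f : ℝ → ℝ) (b : ℝ) : Prop :=
  b ∈ Set.Ioo (0:ℝ) 1 ∧
  DifferentiableWithinAt ℝ f (Set.Iio b) b ∧
  DifferentiableWithinAt ℝ f (Set.Ioi b) b ∧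
  derivWithin f (Set.Iio b) b ≠ derivWithin f (Set.Ioi b) b

/-- `G` admits a transition chain of length two. -/
def HasTransitionChain2 (G : Subgroup (Equiv.Perm ℝ)) : Prop :=
  ∃ g ∈ G, ∃ h ∈ G, ∃ a₁ b₁ a₂ b₂ : ℝ,
    IsOrbital g (Set.Ioo a₁ a₂) ∧ IsOrbital h (Set.Ioo b₁ b₂) ∧
    a₁ < b₁ ∧ b₁ < a₂ ∧ a₂ < b₂

/-- A tower of the subgroup `G`: a set of signed orbitals `(A, g)` whose orbitals
form a chain under inclusion, with exactly one signature per orbital. -/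
def IsTower (G : Subgroup (Equiv.Perm ℝ)) (T : Set (Set ℝ × Equiv.Perm ℝ)) : Prop :=
  (∀ p ∈ T, p.2 ∈ G ∧ IsOrbital p.2 p.1) ∧
  (∀ p ∈ T, ∀ q ∈ T, p.1 ⊆ q.1 ∨ q.1 ⊆ p.1) ∧
  (∀ p ∈ T, ∀ q ∈ T, p.1 = q.1 → p = q)

/-- The depth of `G` equals `n`: there is a tower of height `n` and every tower
is finite with height at most `n`. -/
def DepthEq (G : Subgroup (Equiv.Perm ℝ)) (n : ℕ) : Prop :=
  (∃ T, IsTower G T ∧ T.Finite ∧ T.ncard = n) ∧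
  ∀ T, IsTower G T → T.Finite ∧ T.ncard ≤ n

/-!
Upper bound: a tower of `⁅G, G⁆` is a tower of `G`. A PL map fixing `β` is a dilation centred at
`β` on each side of `β`, and such dilations commute, so commutators are the identity near the ends
of every component of the support of `G`. Hence the top orbital `A` of a tower of `⁅G, G⁆` has its
closure inside such a component, and an element of `G` pushing `closure A` off itself has an
orbital strictly containing `A`: the tower cannot have `n` elements.

Lower bound: if `φ ∈ G` mapped an orbital of `G` strictly into itself, the conjugates by powers of
`φ` would give arbitrarily high towers; so an element fixing one end of an orbital fixes the other,
and (with finitely many orbitals per element) `G` has no transition chains. Therefore, for orbitals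
`A ⊊ B` of `g, h ∈ G`, `g` fixes the ends of `B` and is the identity just right of its left end.
For a power `v` of `h` pushing a neighbourhood of a compact `K ⊆ A` into that region, `⁅g, v⁆`
agrees with `g` on `K`, and its orbital through `K` has closure inside `B`. Climbing a tower of `G`
of height `n` this way gives a tower of `⁅G, G⁆` of height `n - 1`.
-/

open Set Filter Topology
open scoped commutatorElement

theorem IsOpen.csInf_notMem {α : Type*} [ConditionallyCompleteLinearOrder α] [TopologicalSpace α]
    [OrderTopology α] [NoMinOrder α] [DenselyOrdered α] {A : Set α} (hA : IsOpen A)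
    (hbdd : BddBelow A) : sInf A ∉ A := fun h ↦ by
  obtain ⟨l, hl, hsub⟩ := exists_Ioc_subset_of_mem_nhds (hA.mem_nhds h) (exists_lt _)
  obtain ⟨m, hlm, hm⟩ := exists_between hl
  exact (csInf_le hbdd (hsub ⟨hlm, hm.le⟩)).not_gt hm

theorem IsOpen.csSup_notMem {α : Type*} [ConditionallyCompleteLinearOrder α] [TopologicalSpace α]
    [OrderTopology α] [NoMaxOrder α] [DenselyOrdered α] {A : Set α} (hA : IsOpen A)
    (hbdd : BddAbove A) : sSup A ∉ A :=
  IsOpen.csInf_notMem (α := αᵒᵈ) hA hbdd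

theorem Ioo_eq_Ioo_iff {α : Type*} [ConditionallyCompleteLinearOrder α] [DenselyOrdered α]
    {a b c d : α} (hab : a < b) : Ioo a b = Ioo c d ↔ a = c ∧ b = d := by
  refine ⟨fun h ↦ ?_, by rintro ⟨rfl, rfl⟩; rfl⟩
  have hcd : c < d := nonempty_Ioo.1 (h ▸ nonempty_Ioo.2 hab)
  exact ⟨by rw [← csInf_Ioo hab, h, csInf_Ioo hcd], by rw [← csSup_Ioo hab, h, csSup_Ioo hcd]⟩

theorem IsOpen.exists_connectedComponentIn_eq_Ioo {F : Set ℝ} (hF : IsOpen F) (hb : BddBelow F)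
    (ha : BddAbove F) {x : ℝ} (hx : x ∈ F) :
    ∃ a b, connectedComponentIn F x = Ioo a b ∧ a ∉ F ∧ b ∉ F := by
  set C := connectedComponentIn F x
  have hC : IsConnected C := isConnected_connectedComponentIn_iff.2 hx
  have hCo : IsOpen C := hF.connectedComponentIn
  have hCF : C ⊆ F := connectedComponentIn_subset F x
  have hCb : BddBelow C := hb.mono hCF
  have hCa : BddAbove C := ha.mono hCF
  -- a point of `F` in the closure of `C` can be added to the connected set `C`
  have hcl : ∀ y ∈ F, y ∈ closure C → y ∈ C := fun y hyF hy ↦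
    have hyC := hC.2.subset_closure (subset_insert y C) (insert_subset hy subset_closure)
    hyC.subset_connectedComponentIn (mem_insert_of_mem _ (mem_connectedComponentIn hx))
      (insert_subset hyF hCF) (mem_insert y C)
  refine ⟨sInf C, sSup C, ?_, fun h ↦ hCo.csInf_notMem hCb (hcl _ h (csInf_mem_closure hC.1 hCb)),
    fun h ↦ hCo.csSup_notMem hCa (hcl _ h (csSup_mem_closure hC.1 hCa))⟩
  refine Subset.antisymm (fun y hy ↦ ⟨?_, ?_⟩) (hC.Ioo_csInf_csSup_subset hCb hCa)
  · exact (csInf_le hCb hy).lt_of_ne fun h ↦ hCo.csInf_notMem hCb (h ▸ hy)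
  · exact (le_csSup hCa hy).lt_of_ne fun h ↦ hCo.csSup_notMem hCa (h.symm ▸ hy)

theorem Equiv.Perm.commutatorElement_apply_eq_of_apply_inv_eq {α : Type*} {g v : Equiv.Perm α}
    {x : α} (h : g (v⁻¹ x) = v⁻¹ x) : ⁅g, v⁆ x = g x := by
  rw [commutatorElement_def, Equiv.Perm.mul_apply, Equiv.Perm.mul_apply, Equiv.Perm.mul_apply,
    Equiv.Perm.inv_eq_iff_eq.2 h.symm]
  simp only [Equiv.Perm.coe_inv, Equiv.apply_symm_apply]

theorem Equiv.Perm.commutatorElement_apply_eq_self {α : Type*} {g v : Equiv.Perm α} {x : α}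
    (hg : g x = x) (hv : v x = x) : ⁅g, v⁆ x = x := by
  rw [commutatorElement_def]
  simp only [Equiv.Perm.mul_apply, Equiv.Perm.inv_eq_iff_eq.2 hg.symm,
    Equiv.Perm.inv_eq_iff_eq.2 hv.symm, hv, hg]

namespace Homeo01

variable {g : Equiv.Perm ℝ} {β : ℝ}

def orderIso (hg : Homeo01 g) : ℝ ≃o ℝ := ⟨g, hg.1.le_iff_le⟩

theorem continuous (hg : Homeo01 g) : Continuous g := hg.orderIso.continuous

theorem inv (hg : Homeo01 g) : Homeo01 g⁻¹ :=
  ⟨hg.orderIso.symm.strictMono, fun x hx ↦ Equiv.Perm.inv_eq_iff_eq.2 (hg.2 x hx).symm⟩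

theorem image_Ioo (hg : Homeo01 g) (a b : ℝ) : g '' Ioo a b = Ioo (g a) (g b) :=
  hg.orderIso.image_Ioo a b

theorem isOpen_supp (hg : Homeo01 g) : IsOpen (Supp g) :=
  isOpen_ne_fun hg.continuous continuous_id

theorem supp_subset (hg : Homeo01 g) : Supp g ⊆ Ioo 0 1 :=
  fun x hx ↦ by_contra fun h ↦ hx (hg.2 x h)

theorem tendsto_nhdsGT (hg : Homeo01 g) (hβ : g β = β) : Tendsto g (𝓝[>] β) (𝓝[>] β) :=
  tendsto_nhdsWithin_of_tendsto_nhds_of_eventually_within _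
    ((hβ ▸ hg.continuous.tendsto β).mono_left nhdsWithin_le_nhds)
    (eventually_nhdsWithin_of_forall fun _ hx ↦ hβ ▸ hg.1 hx)

theorem tendsto_nhdsLT (hg : Homeo01 g) (hβ : g β = β) : Tendsto g (𝓝[<] β) (𝓝[<] β) :=
  tendsto_nhdsWithin_of_tendsto_nhds_of_eventually_within _
    ((hβ ▸ hg.continuous.tendsto β).mono_left nhdsWithin_le_nhds)
    (eventually_nhdsWithin_of_forall fun _ hx ↦ hβ ▸ hg.1 hx)

theorem exists_connectedComponentIn_eq_Ioo (hg : Homeo01 g) {x : ℝ} (hx : x ∈ Supp g) :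
    ∃ a b, connectedComponentIn (Supp g) x = Ioo a b ∧ g a = a ∧ g b = b := by
  have hbdd := hg.supp_subset
  obtain ⟨a, b, h, ha, hb⟩ := hg.isOpen_supp.exists_connectedComponentIn_eq_Ioo
    (bddBelow_Ioo.mono hbdd) (bddAbove_Ioo.mono hbdd) hx
  exact ⟨a, b, h, not_not.1 ha, not_not.1 hb⟩

end Homeo01

section Orbitals

variable {f : ℝ → ℝ} {g w : Equiv.Perm ℝ} {A B : Set ℝ} {a b c d x : ℝ}

theorem IsOrbital.eq_of_mem (hA : IsOrbital f A) (hB : IsOrbital f B) (hxA : x ∈ A)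
    (hxB : x ∈ B) : A = B := by
  obtain ⟨_, _, rfl⟩ := hA
  obtain ⟨_, _, rfl⟩ := hB
  exact (connectedComponentIn_eq hxA).trans (connectedComponentIn_eq hxB).symm

theorem isOrbital_Ioo_iff (hg : Homeo01 g) :
    IsOrbital g (Ioo a b) ↔ a < b ∧ g a = a ∧ g b = b ∧ ∀ x ∈ Ioo a b, g x ≠ x := by
  constructor
  · rintro ⟨x, hx, hC⟩
    obtain ⟨a', b', hC', ha, hb⟩ := hg.exists_connectedComponentIn_eq_Ioo hx
    have hxab : x ∈ Ioo a b := hC ▸ mem_connectedComponentIn hx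
    obtain ⟨rfl, rfl⟩ := (Ioo_eq_Ioo_iff (hxab.1.trans hxab.2)).1 (hC.trans hC')
    exact ⟨hxab.1.trans hxab.2, ha, hb, hC ▸ connectedComponentIn_subset _ _⟩
  · rintro ⟨hab, ha, hb, hmove⟩
    obtain ⟨x, hx⟩ := nonempty_Ioo.2 hab
    obtain ⟨a', b', hC, ha', hb'⟩ := hg.exists_connectedComponentIn_eq_Ioo (hmove x hx)
    have hsub : Ioo a b ⊆ Ioo a' b' :=
      hC ▸ isPreconnected_Ioo.subset_connectedComponentIn hx hmove
    obtain ⟨h₁, h₂⟩ := (Ioo_subset_Ioo_iff hab).1 hsub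
    have hsupp : Ioo a' b' ⊆ Supp g := hC ▸ connectedComponentIn_subset _ _
    have ha'a : a' = a := h₁.eq_of_not_lt fun h ↦ hsupp ⟨h, hab.trans_le h₂⟩ ha
    have hbb' : b = b' := h₂.eq_of_not_lt fun h ↦ hsupp ⟨h₁.trans_lt hab, h⟩ hb
    exact ⟨x, hmove x hx, by rw [hC, ha'a, hbb']⟩

theorem IsOrbital.exists_eq_Ioo (hg : Homeo01 g) (hA : IsOrbital g A) : ∃ a b, A = Ioo a b := by
  obtain ⟨x, hx, rfl⟩ := hA
  obtain ⟨a, b, h, -⟩ := hg.exists_connectedComponentIn_eq_Ioo hx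
  exact ⟨a, b, h⟩

theorem exists_isOrbital_Ioo_superset (hg : Homeo01 g) {S : Set ℝ} (hS : IsPreconnected S)
    (hx : x ∈ S) (hSg : S ⊆ Supp g) : ∃ a b, IsOrbital g (Ioo a b) ∧ S ⊆ Ioo a b := by
  obtain ⟨a, b, hC, -⟩ := hg.exists_connectedComponentIn_eq_Ioo (hSg hx)
  exact ⟨a, b, ⟨x, hSg hx, hC.symm⟩, hC ▸ hS.subset_connectedComponentIn hx hSg⟩

theorem exists_isOrbital_Ioo_mem (hg : Homeo01 g) (hx : g x ≠ x) :
    ∃ a b, IsOrbital g (Ioo a b) ∧ x ∈ Ioo a b := by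
  obtain ⟨a, b, h, hx⟩ := exists_isOrbital_Ioo_superset hg isPreconnected_singleton rfl
    (singleton_subset_iff.2 hx)
  exact ⟨a, b, h, singleton_subset_iff.1 hx⟩

theorem IsOrbital.eq_or_le_or_le (hg : Homeo01 g) (hA : IsOrbital g (Ioo a b))
    (hC : IsOrbital g (Ioo c d)) : (a = c ∧ b = d) ∨ b ≤ c ∨ d ≤ a := by
  have hab := ((isOrbital_Ioo_iff hg).1 hA).1
  have hcd := ((isOrbital_Ioo_iff hg).1 hC).1
  by_contra! h
  obtain ⟨hne, hcb, had⟩ := h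
  obtain ⟨z, hz, hz'⟩ := exists_between (max_lt (lt_min hab had) (lt_min hcb hcd))
  have hzA : z ∈ Ioo a b := ⟨(le_max_left a c).trans_lt hz, hz'.trans_le (min_le_left b d)⟩
  have hzC : z ∈ Ioo c d := ⟨(le_max_right a c).trans_lt hz, hz'.trans_le (min_le_right b d)⟩
  obtain ⟨h₁, h₂⟩ := (Ioo_eq_Ioo_iff hab).1 (hA.eq_of_mem hC hzA hzC)
  exact hne h₁ h₂

theorem IsOrbital.Ioo_subset_of_apply_eq (hg : Homeo01 g) (hC : IsOrbital g (Ioo c d))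
    (hx : x ∈ Ioo c d) (hx' : x ∈ Ioo a b) (ha : g a = a) (hb : g b = b) :
    Ioo c d ⊆ Ioo a b := by
  have hmove := ((isOrbital_Ioo_iff hg).1 hC).2.2.2
  exact Ioo_subset_Ioo (le_of_not_gt fun h ↦ hmove a ⟨h, hx'.1.trans hx.2⟩ ha)
    (le_of_not_gt fun h ↦ hmove b ⟨hx.1.trans hx'.2, h⟩ hb)

theorem IsOrbital.Icc_subset_of_eventually_apply_eq (hg : Homeo01 g) (hC : IsOrbital g (Ioo c d))
    (hsub : Ioo c d ⊆ Ioo a b) (ha : ∀ᶠ x in 𝓝[>] a, g x = x) (hb : ∀ᶠ x in 𝓝[<] b, g x = x) :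
    Icc c d ⊆ Ioo a b := by
  obtain ⟨hcd, -, -, hmove⟩ := (isOrbital_Ioo_iff hg).1 hC
  obtain ⟨hac, hdb⟩ := (Ioo_subset_Ioo_iff hcd).1 hsub
  refine Icc_subset_Ioo (hac.lt_of_ne ?_) (hdb.lt_of_ne ?_)
  · rintro rfl
    obtain ⟨x, hfix, hx⟩ := (ha.and (Ioo_mem_nhdsGT hcd)).exists
    exact hmove x hx hfix
  · rintro rfl
    obtain ⟨x, hfix, hx⟩ := (hb.and (Ioo_mem_nhdsLT hcd)).exists
    exact hmove x hx hfix

theorem supp_conj (g w : Equiv.Perm ℝ) : Supp ⇑(w * g * w⁻¹) = w '' Supp g := by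
  ext x
  rw [Equiv.image_eq_preimage_symm]
  show w (g (w⁻¹ x)) ≠ x ↔ g (w⁻¹ x) ≠ w⁻¹ x
  rw [ne_eq, ← Equiv.Perm.eq_inv_iff_eq]

theorem IsOrbital.conj (hw : Homeo01 w) (hA : IsOrbital g A) :
    IsOrbital ⇑(w * g * w⁻¹) (w '' A) := by
  obtain ⟨x, hx, rfl⟩ := hA
  refine ⟨w x, supp_conj g w ▸ mem_image_of_mem w hx, ?_⟩
  rw [supp_conj]
  exact hw.orderIso.toHomeomorph.image_connectedComponentIn hx

end Orbitals

section GroupOrbitals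

variable {H : Subgroup (Equiv.Perm ℝ)} {K : Set ℝ} {p q : ℝ}

theorem isOpen_gSupp (hH : ∀ g ∈ H, Homeo01 g) : IsOpen (GSupp H) := by
  have : GSupp H = ⋃ g ∈ H, Supp g := by ext; simp [GSupp, Supp]
  exact this ▸ isOpen_biUnion fun g hg ↦ (hH g hg).isOpen_supp

theorem gSupp_subset (hH : ∀ g ∈ H, Homeo01 g) : GSupp H ⊆ Ioo 0 1 :=
  fun _ ⟨g, hg, hx⟩ ↦ (hH g hg).supp_subset hx

theorem gSupp_zpowers (h : Equiv.Perm ℝ) : GSupp (Subgroup.zpowers h) = Supp h := by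
  ext x
  refine ⟨?_, fun hx ↦ ⟨h, Subgroup.mem_zpowers h, hx⟩⟩
  rintro ⟨_, ⟨k, rfl⟩, hx⟩ hfix
  exact hx (Equiv.Perm.zpow_apply_eq_self_of_apply_eq_self hfix k)

theorem isGroupOrbital_zpowers_iff {h : Equiv.Perm ℝ} :
    IsGroupOrbital (Subgroup.zpowers h) K ↔ IsOrbital h K := by
  rw [IsGroupOrbital, gSupp_zpowers]
  rfl

theorem IsGroupOrbital.exists_lt_apply (hH : ∀ g ∈ H, Homeo01 g) (hK : IsGroupOrbital H K)
    (hp : p ∈ K) (hq : q ∈ K) : ∃ v ∈ H, q < v p := by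
  obtain ⟨x, hx, rfl⟩ := hK
  obtain ⟨a, b, hK, ha, hb⟩ := (isOpen_gSupp hH).exists_connectedComponentIn_eq_Ioo
    (bddBelow_Ioo.mono (gSupp_subset hH)) (bddAbove_Ioo.mono (gSupp_subset hH)) hx
  have hKsupp : Ioo a b ⊆ GSupp H := hK ▸ connectedComponentIn_subset _ _
  rw [hK] at hp hq
  have hmaps : ∀ u ∈ H, u '' Ioo a b = Ioo a b := fun u hu ↦ by
    rw [(hH u hu).image_Ioo, not_not.1 fun h ↦ ha ⟨u, hu, h⟩, not_not.1 fun h ↦ hb ⟨u, hu, h⟩]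
  -- the supremum of the orbit of `p` is fixed by `H`, hence it is the right end of the component
  set Λ := (fun v : Equiv.Perm ℝ ↦ v p) '' H
  have hΛ : Λ ⊆ Ioo a b := by
    rintro _ ⟨v, hv, rfl⟩
    exact hmaps v hv ▸ mem_image_of_mem v hp
  have hne : Λ.Nonempty := ⟨p, 1, H.one_mem, rfl⟩
  have hbdd : BddAbove Λ := bddAbove_Ioo.mono hΛ
  have hfix : ∀ u ∈ H, u (sSup Λ) = sSup Λ := by
    intro u hu
    have himg : u '' Λ = Λ := by
      ext y
      constructor
      · rintro ⟨_, ⟨v, hv, rfl⟩, rfl⟩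
        exact ⟨u * v, H.mul_mem hu hv, rfl⟩
      · rintro ⟨v, hv, rfl⟩
        exact ⟨(u⁻¹ * v) p, ⟨u⁻¹ * v, H.mul_mem (H.inv_mem hu) hv, rfl⟩, by simp⟩
    exact ((hH u hu).orderIso.map_csSup' hne hbdd).trans (congrArg sSup himg)
  have hsup : sSup Λ = b := by
    refine (csSup_le hne fun y hy ↦ (hΛ hy).2.le).eq_of_not_lt fun hlt ↦ ?_
    obtain ⟨u, hu, hmove⟩ := hKsupp ⟨hp.1.trans_le (le_csSup hbdd ⟨1, H.one_mem, rfl⟩), hlt⟩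
    exact hmove (hfix u hu)
  obtain ⟨_, ⟨v, hv, rfl⟩, hqv⟩ := exists_lt_of_lt_csSup hne (hsup ▸ hq.2)
  exact ⟨v, hv, hqv⟩

end GroupOrbitals

section PiecewiseLinear

variable {f : ℝ → ℝ} {a b β : ℝ}

theorem LocallyAffineAt.eventually (h : LocallyAffineAt f a) :
    ∃ m c, ∀ᶠ x in 𝓝 a, f x = m * x + c := by
  obtain ⟨ε, hε, m, c, h⟩ := h
  exact ⟨m, c, Metric.eventually_nhds_iff.2 ⟨ε, hε, fun x hx ↦ h x (Real.dist_eq x a ▸ hx)⟩⟩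

theorem exists_eqOn_affine_Ioo (h : ∀ x ∈ Ioo a b, LocallyAffineAt f x) :
    ∃ m c, EqOn f (fun x ↦ m * x + c) (Ioo a b) := by
  have hderiv : ∀ x ∈ Ioo a b, ∃ m, ∀ᶠ y in 𝓝 x, HasDerivAt f m y := fun x hx ↦ by
    obtain ⟨m, c, hf⟩ := (h x hx).eventually
    refine ⟨m, hf.eventually_nhds.mono fun y hy ↦ ?_⟩
    simpa using (((hasDerivAt_id y).const_mul m).add_const c).congr_of_eventuallyEq hy
  have hdiff : DifferentiableOn ℝ f (Ioo a b) := fun x hx ↦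
    (hderiv x hx).choose_spec.self_of_nhds.differentiableAt.differentiableWithinAt
  -- the derivative is locally constant, hence constant on the interval
  have hderiv' : ∀ x ∈ Ioo a b, HasDerivAt (deriv f) 0 x := fun x hx ↦ by
    obtain ⟨m, hm⟩ := hderiv x hx
    exact (hasDerivAt_const x m).congr_of_eventuallyEq (hm.mono fun y hy ↦ hy.deriv)
  obtain ⟨m, hm⟩ := isOpen_Ioo.exists_is_const_of_deriv_eq_zero isPreconnected_Ioo
    (fun x hx ↦ (hderiv' x hx).differentiableAt.differentiableWithinAt)
    (fun x hx ↦ (hderiv' x hx).deriv)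
  obtain ⟨c, hc⟩ := isOpen_Ioo.exists_eq_add_of_deriv_eq isPreconnected_Ioo hdiff
    (differentiableOn_id.const_mul m) (fun x hx ↦ by simp [hm x hx])
  exact ⟨m, c, hc⟩

theorem exists_eqOn_affine_Icc (hab : a < b) (hf : ContinuousOn f (Icc a b))
    (h : ∀ x ∈ Ioo a b, LocallyAffineAt f x) : ∃ m c, EqOn f (fun x ↦ m * x + c) (Icc a b) := by
  obtain ⟨m, c, hmc⟩ := exists_eqOn_affine_Ioo h
  exact ⟨m, c, hmc.of_subset_closure hf (by fun_prop) Ioo_subset_Icc_self (closure_Ioo hab.ne).ge⟩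

theorem IsPL.eventually_locallyAffineAt (hf : IsPL f) (β : ℝ) :
    ∀ᶠ x in 𝓝[≠] β, LocallyAffineAt f x := by
  have : (({x | ¬LocallyAffineAt f x}) \ {β})ᶜ ∈ 𝓝 β :=
    hf.sdiff.isClosed.compl_mem_nhds fun h ↦ h.2 rfl
  filter_upwards [nhdsWithin_le_nhds this, self_mem_nhdsWithin] with x hx hxβ
  exact by_contra fun h ↦ hx ⟨h, hxβ⟩

theorem PLHomeo.eventually_eq_linear_nhdsGT {g : Equiv.Perm ℝ} (hg : PLHomeo g) (β : ℝ) :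
    ∃ s, ∀ᶠ x in 𝓝[>] β, g x = g β + s * (x - β) := by
  obtain ⟨u, hβu, hu⟩ := (nhdsGT_basis β).eventually_iff.1
    (nhdsWithin_mono β (fun x hx ↦ ne_of_gt hx) (hg.2.eventually_locallyAffineAt β))
  obtain ⟨m, c, hmc⟩ := exists_eqOn_affine_Icc hβu hg.1.continuous.continuousOn hu
  refine ⟨m, ?_⟩
  filter_upwards [Ioo_mem_nhdsGT hβu] with x hx
  rw [hmc (Ioo_subset_Icc_self hx), hmc (left_mem_Icc.2 hβu.le)]
  ring

theorem PLHomeo.eventually_eq_linear_nhdsLT {g : Equiv.Perm ℝ} (hg : PLHomeo g) (β : ℝ) :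
    ∃ s, ∀ᶠ x in 𝓝[<] β, g x = g β + s * (x - β) := by
  obtain ⟨u, huβ, hu⟩ := (nhdsLT_basis β).eventually_iff.1
    (nhdsWithin_mono β (fun x hx ↦ ne_of_lt hx) (hg.2.eventually_locallyAffineAt β))
  obtain ⟨m, c, hmc⟩ := exists_eqOn_affine_Icc huβ hg.1.continuous.continuousOn hu
  refine ⟨m, ?_⟩
  filter_upwards [Ioo_mem_nhdsLT huβ] with x hx
  rw [hmc (Ioo_subset_Icc_self hx), hmc (right_mem_Icc.2 huβ.le)]
  ring

-- Dilations with a common centre commute.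
theorem eventually_commutator_apply_eq {l : Filter ℝ} {a b : Equiv.Perm ℝ} {s t : ℝ}
    (ha' : Tendsto ⇑a⁻¹ l l) (hb : Tendsto b l l) (hb' : Tendsto ⇑b⁻¹ l l)
    (has : ∀ᶠ x in l, a x = β + s * (x - β)) (hbt : ∀ᶠ x in l, b x = β + t * (x - β)) :
    ∀ᶠ x in l, ⁅a, b⁆ x = x := by
  have hab' := ha'.comp hb'
  filter_upwards [hb'.eventually hbt, hab'.eventually has, hab'.eventually hbt,
    (hb.comp hab').eventually has] with x h₁ h₂ h₃ h₄
  simp only [Function.comp_apply, Equiv.Perm.coe_inv, Equiv.apply_symm_apply] at h₁ h₂ h₃ h₄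
  rw [commutatorElement_def]
  simp only [Equiv.Perm.mul_apply]
  linear_combination h₄ + s * h₃ - h₁ - t * h₂

theorem PLHomeo.eventually_commutator_apply_eq_nhdsGT {a b : Equiv.Perm ℝ} (ha : PLHomeo a)
    (hb : PLHomeo b) (haβ : a β = β) (hbβ : b β = β) : ∀ᶠ x in 𝓝[>] β, ⁅a, b⁆ x = x := by
  obtain ⟨s, hs⟩ := ha.eventually_eq_linear_nhdsGT β
  obtain ⟨t, ht⟩ := hb.eventually_eq_linear_nhdsGT β
  rw [haβ] at hs
  rw [hbβ] at ht
  have ha' : a⁻¹ β = β := Equiv.Perm.inv_eq_iff_eq.2 haβ.symm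
  have hb' : b⁻¹ β = β := Equiv.Perm.inv_eq_iff_eq.2 hbβ.symm
  exact eventually_commutator_apply_eq (ha.1.inv.tendsto_nhdsGT ha') (hb.1.tendsto_nhdsGT hbβ)
    (hb.1.inv.tendsto_nhdsGT hb') hs ht

theorem PLHomeo.eventually_commutator_apply_eq_nhdsLT {a b : Equiv.Perm ℝ} (ha : PLHomeo a)
    (hb : PLHomeo b) (haβ : a β = β) (hbβ : b β = β) : ∀ᶠ x in 𝓝[<] β, ⁅a, b⁆ x = x := by
  obtain ⟨s, hs⟩ := ha.eventually_eq_linear_nhdsLT β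
  obtain ⟨t, ht⟩ := hb.eventually_eq_linear_nhdsLT β
  rw [haβ] at hs
  rw [hbβ] at ht
  have ha' : a⁻¹ β = β := Equiv.Perm.inv_eq_iff_eq.2 haβ.symm
  have hb' : b⁻¹ β = β := Equiv.Perm.inv_eq_iff_eq.2 hbβ.symm
  exact eventually_commutator_apply_eq (ha.1.inv.tendsto_nhdsLT ha') (hb.1.tendsto_nhdsLT hbβ)
    (hb.1.inv.tendsto_nhdsLT hb') hs ht

theorem PLHomeo.finite_setOf_isOrbital {g : Equiv.Perm ℝ} (hg : PLHomeo g) :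
    {x | ∃ y, IsOrbital g (Ioo x y)}.Finite := by
  -- every orbital contains a breakpoint: an affine map fixing both ends of an interval is the
  -- identity on it
  have hbreak : ∀ x ∈ {x | ∃ y, IsOrbital g (Ioo x y)},
      ∃ z, (∃ y, IsOrbital g (Ioo x y) ∧ z ∈ Ioo x y) ∧ ¬LocallyAffineAt g z := by
    rintro x ⟨y, hX⟩
    obtain ⟨hxy, hx, hy, hmove⟩ := (isOrbital_Ioo_iff hg.1).1 hX
    have hmid : (x + y) / 2 ∈ Ioo x y := ⟨by linarith, by linarith⟩
    by_contra! h
    obtain ⟨m, c, hmc⟩ := exists_eqOn_affine_Icc hxy hg.1.continuous.continuousOn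
      fun z hz ↦ h z ⟨y, hX, hz⟩
    have h₁ : g x = m * x + c := hmc (left_mem_Icc.2 hxy.le)
    have h₂ : g y = m * y + c := hmc (right_mem_Icc.2 hxy.le)
    refine hmove _ hmid ?_
    rw [hmc (Ioo_subset_Icc_self hmid)]
    linear_combination (hx - h₁ + hy - h₂) / 2
  choose! z hz hnot using hbreak
  refine Finite.of_finite_image (hg.2.subset (image_subset_iff.2 hnot)) fun x₁ h₁ x₂ h₂ heq ↦ ?_
  obtain ⟨y₁, hX₁, hz₁⟩ := hz x₁ h₁
  obtain ⟨y₂, hX₂, hz₂⟩ := hz x₂ h₂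
  rw [heq] at hz₁
  exact ((Ioo_eq_Ioo_iff (hz₁.1.trans hz₁.2)).1 (hX₁.eq_of_mem hX₂ hz₁ hz₂)).1

end PiecewiseLinear

def eventuallyFixing {α : Type*} (l : Filter α) : Subgroup (Equiv.Perm α) where
  carrier := {f | ∀ᶠ x in l, f x = x}
  mul_mem' ha hb := by
    filter_upwards [ha, hb] with x hax hbx
    rw [Equiv.Perm.mul_apply, hbx, hax]
  one_mem' := Eventually.of_forall fun _ ↦ rfl
  inv_mem' ha := by
    filter_upwards [ha] with x hx
    rw [Equiv.Perm.inv_eq_iff_eq, hx]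

section CommutatorGerms

variable {G : Subgroup (Equiv.Perm ℝ)} {β : ℝ}

theorem commutator_le_eventuallyFixing_nhdsGT (hG : ∀ g ∈ G, PLHomeo g)
    (hβ : ∀ g ∈ G, g β = β) : ⁅G, G⁆ ≤ eventuallyFixing (𝓝[>] β) :=
  Subgroup.commutator_le.2 fun a ha b hb ↦
    (hG a ha).eventually_commutator_apply_eq_nhdsGT (hG b hb) (hβ a ha) (hβ b hb)

theorem commutator_le_eventuallyFixing_nhdsLT (hG : ∀ g ∈ G, PLHomeo g)
    (hβ : ∀ g ∈ G, g β = β) : ⁅G, G⁆ ≤ eventuallyFixing (𝓝[<] β) :=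
  Subgroup.commutator_le.2 fun a ha b hb ↦
    (hG a ha).eventually_commutator_apply_eq_nhdsLT (hG b hb) (hβ a ha) (hβ b hb)

end CommutatorGerms

section BoundedDepth

variable {G : Subgroup (Equiv.Perm ℝ)} {n : ℕ} {a b φ : Equiv.Perm ℝ} {X : Set ℝ}
  {x y x₁ x₂ y₁ y₂ : ℝ}

theorem image_eq_of_image_subset (hG : ∀ g ∈ G, Homeo01 g)
    (hn : ∀ T, IsTower G T → T.ncard ≤ n) (ha : a ∈ G) (hφ : φ ∈ G) (hX : IsOrbital a X)
    (hsub : φ '' X ⊆ X) : φ '' X = X := by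
  by_contra hne
  -- otherwise the orbitals `φ ^ k '' X` of the conjugates of `a` form arbitrarily high towers
  set A : ℕ → Set ℝ := fun k ↦ ⇑(φ ^ k) '' X
  have hA : StrictAnti A := strictAnti_nat_of_succ_lt fun k ↦ by
    have hAk : A (k + 1) = ⇑(φ ^ k) '' (φ '' X) := by
      simp only [A, pow_succ, Equiv.Perm.coe_mul, image_comp]
    rw [hAk]
    exact (image_mono hsub).ssubset_of_ne fun h ↦ hne ((φ ^ k).injective.image_injective h)
  have htower :
      IsTower G (range fun k : Fin (n + 1) ↦ (A k, φ ^ (k : ℕ) * a * (φ ^ (k : ℕ))⁻¹)) := by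
    refine ⟨?_, ?_, ?_⟩
    · rintro _ ⟨k, rfl⟩
      have hφk := G.pow_mem hφ k
      exact ⟨G.mul_mem (G.mul_mem hφk ha) (G.inv_mem hφk), hX.conj (hG _ hφk)⟩
    · rintro _ ⟨k, rfl⟩ _ ⟨l, rfl⟩
      rcases le_total (k : ℕ) l with h | h
      exacts [Or.inr (hA.antitone h), Or.inl (hA.antitone h)]
    · rintro _ ⟨k, rfl⟩ _ ⟨l, rfl⟩ h
      rw [Fin.ext (hA.injective h)]
  have := hn _ htower
  rw [ncard_range_of_injective fun k l h ↦ Fin.ext (hA.injective (congrArg Prod.fst h)),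
    Nat.card_eq_fintype_card, Fintype.card_fin] at this
  omega

theorem image_eq_of_image_comparable (hG : ∀ g ∈ G, Homeo01 g)
    (hn : ∀ T, IsTower G T → T.ncard ≤ n) (ha : a ∈ G) (hφ : φ ∈ G) (hX : IsOrbital a X)
    (h : φ '' X ⊆ X ∨ X ⊆ φ '' X) : φ '' X = X := by
  rcases h with h | h
  · exact image_eq_of_image_subset hG hn ha hφ hX h
  · have hinv : ⇑φ⁻¹ '' X ⊆ X := by simpa using image_mono (f := ⇑φ⁻¹) h
    nth_rw 1 [← image_eq_of_image_subset hG hn ha (G.inv_mem hφ) hX hinv]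
    simp

theorem apply_right_eq_of_apply_left_eq (hG : ∀ g ∈ G, Homeo01 g)
    (hn : ∀ T, IsTower G T → T.ncard ≤ n) (ha : a ∈ G) (hφ : φ ∈ G)
    (hX : IsOrbital a (Ioo x y)) (hφx : φ x = x) : φ y = y := by
  have h := image_eq_of_image_comparable hG hn ha hφ hX <| by
    rw [(hG φ hφ).image_Ioo, hφx]
    exact (le_total (φ y) y).imp Ioo_subset_Ioo_right Ioo_subset_Ioo_right
  rw [(hG φ hφ).image_Ioo, hφx] at h
  exact ((Ioo_eq_Ioo_iff ((isOrbital_Ioo_iff (hG a ha)).1 hX).1).1 h.symm).2.symm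

theorem exists_transitionChain_left (hG : ∀ g ∈ G, Homeo01 g)
    (hn : ∀ T, IsTower G T → T.ncard ≤ n) (ha : a ∈ G) (hb : b ∈ G)
    (hX : IsOrbital a (Ioo x₁ x₂)) (hY : IsOrbital b (Ioo y₁ y₂)) (h₁ : x₁ < y₁) (h₂ : y₁ < x₂)
    (h₃ : x₂ < y₂) :
    ∃ x₁' x₂' y₁' y₂', IsOrbital a (Ioo x₁' x₂') ∧ IsOrbital b (Ioo y₁' y₂') ∧
      x₁' < y₁' ∧ y₁' < x₂' ∧ x₂' < y₂' ∧ y₁' < y₁ := by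
  have hXmove := ((isOrbital_Ioo_iff (hG a ha)).1 hX).2.2.2
  have hYmove := ((isOrbital_Ioo_iff (hG b hb)).1 hY).2.2.2
  have hbx₁ : b x₁ ≠ x₁ := fun h ↦
    hYmove x₂ ⟨h₂, h₃⟩ (apply_right_eq_of_apply_left_eq hG hn ha hb hX h)
  obtain ⟨y₁', y₂', hY', hx₁⟩ := exists_isOrbital_Ioo_mem (hG b hb) hbx₁
  have hy₂' : y₂' ≤ y₁ := by
    rcases hY'.eq_or_le_or_le (hG b hb) hY with ⟨rfl, -⟩ | h | h <;> linarith [hx₁.1, hx₁.2]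
  have hay₁' : a y₁' ≠ y₁' := fun h ↦
    hXmove y₂' ⟨hx₁.2, by linarith⟩ (apply_right_eq_of_apply_left_eq hG hn hb ha hY' h)
  obtain ⟨x₁', x₂', hX', hy₁'⟩ := exists_isOrbital_Ioo_mem (hG a ha) hay₁'
  have hx₂' : x₂' ≤ x₁ := by
    rcases hX'.eq_or_le_or_le (hG a ha) hX with ⟨rfl, -⟩ | h | h <;> linarith [hy₁'.1, hx₁.1]
  exact ⟨x₁', x₂', y₁', y₂', hX', hY', hy₁'.1, hy₁'.2, by linarith [hx₁.2], by linarith [hx₁.1]⟩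

theorem not_hasTransitionChain2 (hG : ∀ g ∈ G, PLHomeo g)
    (hn : ∀ T, IsTower G T → T.ncard ≤ n) : ¬HasTransitionChain2 G := by
  rintro ⟨a, ha, b, hb, x₁, y₁, x₂, y₂, hX, hY, h₁, h₂, h₃⟩
  -- a transition chain whose second orbital starts leftmost can still be pushed to the left
  set S := {y₁ | ∃ x₁ x₂ y₂, IsOrbital a (Ioo x₁ x₂) ∧ IsOrbital b (Ioo y₁ y₂) ∧
    x₁ < y₁ ∧ y₁ < x₂ ∧ x₂ < y₂}
  have hS : S.Finite :=
    (hG b hb).finite_setOf_isOrbital.subset fun _ ⟨_, _, y₂, _, hY, _⟩ ↦ ⟨y₂, hY⟩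
  have hne : S.Nonempty := ⟨y₁, x₁, x₂, y₂, hX, hY, h₁, h₂, h₃⟩
  obtain ⟨x₁, x₂, y₂, hX, hY, h₁, h₂, h₃⟩ := hne.csInf_mem hS
  obtain ⟨x₁', x₂', y₁', y₂', hX', hY', h₁', h₂', h₃', hlt⟩ :=
    exists_transitionChain_left (fun g hg ↦ (hG g hg).1) hn ha hb hX hY h₁ h₂ h₃
  exact hlt.not_ge (csInf_le hS.bddBelow ⟨x₁', x₂', y₂', hX', hY', h₁', h₂', h₃'⟩)

end BoundedDepth

section NestedOrbitals

variable {G : Subgroup (Equiv.Perm ℝ)} {n : ℕ} {g h : Equiv.Perm ℝ} {A : Set ℝ}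
  {a₁ a₂ b₁ b₂ p q : ℝ}

theorem apply_eq_of_isOrbital_subset (hG : ∀ g ∈ G, PLHomeo g)
    (hn : ∀ T, IsTower G T → T.ncard ≤ n) (hg : g ∈ G) (hh : h ∈ G)
    (hA : IsOrbital g (Ioo a₁ a₂)) (hB : IsOrbital h (Ioo b₁ b₂)) (hAB : Ioo a₁ a₂ ⊆ Ioo b₁ b₂) :
    g b₁ = b₁ ∧ g b₂ = b₂ := by
  have hchain := not_hasTransitionChain2 hG hn
  have ha := ((isOrbital_Ioo_iff (hG g hg).1).1 hA).1
  obtain ⟨hb₁, hb₂⟩ := (Ioo_subset_Ioo_iff ha).1 hAB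
  constructor <;> by_contra hgb <;>
    obtain ⟨c, e, hC, hce⟩ := exists_isOrbital_Ioo_mem (hG g hg).1 hgb
  · rcases hC.eq_or_le_or_le (hG g hg).1 hA with ⟨rfl, -⟩ | hle | hle
    · linarith [hce.1]
    · exact hchain ⟨g, hg, h, hh, c, b₁, e, b₂, hC, hB, hce.1, hce.2, by linarith [hce.1]⟩
    · linarith [hce.1]
  · rcases hC.eq_or_le_or_le (hG g hg).1 hA with ⟨-, rfl⟩ | hle | hle
    · linarith [hce.2]
    · linarith [hce.2]
    · exact hchain ⟨h, hh, g, hg, b₁, c, b₂, e, hB, hC, by linarith [hce.1], hce.1, hce.2⟩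

theorem eventually_apply_eq_of_isOrbital_ssubset (hG : ∀ g ∈ G, PLHomeo g)
    (hn : ∀ T, IsTower G T → T.ncard ≤ n) (hg : g ∈ G) (hh : h ∈ G)
    (hA : IsOrbital g (Ioo a₁ a₂)) (hB : IsOrbital h (Ioo b₁ b₂)) (hAB : Ioo a₁ a₂ ⊆ Ioo b₁ b₂)
    (hne : Ioo a₁ a₂ ≠ Ioo b₁ b₂) : ∀ᶠ x in 𝓝[>] b₁, g x = x := by
  obtain ⟨hgb₁, hgb₂⟩ := apply_eq_of_isOrbital_subset hG hn hg hh hA hB hAB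
  obtain ⟨s, hs⟩ := (hG g hg).eventually_eq_linear_nhdsGT b₁
  rw [hgb₁] at hs
  by_cases hs₁ : s = 1
  · filter_upwards [hs] with x hx
    rw [hx, hs₁]
    ring
  -- otherwise `g` moves a whole right neighbourhood of `b₁`, which lies in an orbital `Ioo b₁ e`
  -- of `g`; since `h` fixes `b₁` it fixes `e`, so `e = b₂` and `A` would be all of `B`
  obtain ⟨u, hu, hsu⟩ := (nhdsGT_basis b₁).eventually_iff.1 hs
  have hmove : Ioo b₁ u ⊆ Supp g := fun x hx hfix ↦ by
    have : (s - 1) * (x - b₁) = 0 := by linarith [hsu hx]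
    rcases mul_eq_zero.1 this with h | h
    exacts [hs₁ (by linarith), hx.1.ne' (by linarith)]
  obtain ⟨c, e, hC, hsub⟩ := exists_isOrbital_Ioo_superset (hG g hg).1 isPreconnected_Ioo
    (exists_between hu).choose_spec hmove
  obtain ⟨hce, -, -, hCmove⟩ := (isOrbital_Ioo_iff (hG g hg).1).1 hC
  obtain ⟨hcb, hue⟩ := (Ioo_subset_Ioo_iff hu).1 hsub
  obtain rfl : c = b₁ := hcb.eq_of_not_lt fun h ↦ hCmove b₁ ⟨h, hu.trans_le hue⟩ hgb₁
  obtain ⟨hb, hhb₁, -, hBmove⟩ := (isOrbital_Ioo_iff (hG h hh).1).1 hB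
  have hhe : h e = e :=
    apply_right_eq_of_apply_left_eq (fun g hg ↦ (hG g hg).1) hn hg hh hC hhb₁
  obtain rfl : e = b₂ := le_antisymm (le_of_not_gt fun h ↦ hCmove b₂ ⟨hb, h⟩ hgb₂)
    (le_of_not_gt fun h ↦ hBmove e ⟨hce, h⟩ hhe)
  obtain ⟨z, hz⟩ := nonempty_Ioo.2 ((isOrbital_Ioo_iff (hG g hg).1).1 hA).1
  exact (hne (hA.eq_of_mem hC hz (hAB hz))).elim

theorem exists_commutator_isOrbital_between (hG : ∀ g ∈ G, PLHomeo g)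
    (hn : ∀ T, IsTower G T → T.ncard ≤ n) (hg : g ∈ G) (hh : h ∈ G) (hA : IsOrbital g A)
    (hB : IsOrbital h (Ioo b₁ b₂)) (hAB : A ⊆ Ioo b₁ b₂) (hne : A ≠ Ioo b₁ b₂) (hpq : p ≤ q)
    (hpqA : Icc p q ⊆ A) :
    ∃ f ∈ ⁅G, G⁆, ∃ c d, IsOrbital f (Ioo c d) ∧ Icc p q ⊆ Ioo c d ∧ Icc c d ⊆ Ioo b₁ b₂ := by
  obtain ⟨a₁, a₂, rfl⟩ := hA.exists_eq_Ioo (hG g hg).1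
  obtain ⟨hgb₁, hgb₂⟩ := apply_eq_of_isOrbital_subset hG hn hg hh hA hB hAB
  obtain ⟨μ, hμ, hgap⟩ := (nhdsGT_basis b₁).eventually_iff.1
    (eventually_apply_eq_of_isOrbital_ssubset hG hn hg hh hA hB hAB hne)
  obtain ⟨hb, hhb₁, hhb₂, -⟩ := (isOrbital_Ioo_iff (hG h hh).1).1 hB
  have hp : p ∈ Ioo b₁ b₂ := hAB (hpqA (left_mem_Icc.2 hpq))
  have hq : q ∈ Ioo b₁ b₂ := hAB (hpqA (right_mem_Icc.2 hpq))
  obtain ⟨r, hqr, hrb⟩ := exists_between hq.2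
  obtain ⟨μ', hbμ', hμ'⟩ := exists_between (lt_min hμ hb)
  -- a power `v` of `h` pushes `r` below `μ'`, into the interval where `g` is the identity
  have hzpowers : Subgroup.zpowers h ≤ G := Subgroup.zpowers_le.2 hh
  obtain ⟨v, hv, hrv⟩ := (isGroupOrbital_zpowers_iff.2 hB).exists_lt_apply
    (fun k hk ↦ (hG k (hzpowers hk)).1) (p := μ') (q := r)
    ⟨hbμ', hμ'.trans_le (min_le_right _ _)⟩ ⟨hq.1.trans hqr, hrb⟩
  have hvG : v ∈ G := hzpowers hv
  have hvfix : ∀ {β}, h β = β → v β = β := fun hβ ↦ by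
    obtain ⟨k, rfl⟩ := Subgroup.mem_zpowers_iff.1 hv
    exact Equiv.Perm.zpow_apply_eq_self_of_apply_eq_self hβ k
  have hfG : ⁅g, v⁆ ∈ ⁅G, G⁆ := Subgroup.commutator_mem_commutator hg hvG
  have hf : Homeo01 ⁅g, v⁆ := (hG _ (Subgroup.commutator_le_self G hfG)).1
  have hfg : ∀ x ∈ Ioo b₁ r, ⁅g, v⁆ x = g x := fun x hx ↦ by
    have hv' := (hG v hvG).1.inv
    have h₁ : b₁ < v⁻¹ x := by
      simpa [Equiv.Perm.inv_eq_iff_eq.2 (hvfix hhb₁).symm] using hv'.1 hx.1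
    have h₂ : v⁻¹ x < μ' := (hv'.1 hx.2).trans (by simpa using hv'.1 hrv)
    exact Equiv.Perm.commutatorElement_apply_eq_of_apply_inv_eq
      (hgap ⟨h₁, h₂.trans (hμ'.trans_le (min_le_left _ _))⟩)
  have hsupp : Icc p q ⊆ Supp ⇑⁅g, v⁆ := fun x hx ↦ by
    rw [Supp, mem_ofPred_eq, hfg x ⟨hp.1.trans_le hx.1, hx.2.trans_lt hqr⟩]
    exact ((isOrbital_Ioo_iff (hG g hg).1).1 hA).2.2.2 x (hpqA hx)
  obtain ⟨c, d, hC, hpqC⟩ := exists_isOrbital_Ioo_superset hf isPreconnected_Icc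
    (left_mem_Icc.2 hpq) hsupp
  have hCB : Ioo c d ⊆ Ioo b₁ b₂ := hC.Ioo_subset_of_apply_eq hf (hpqC (left_mem_Icc.2 hpq)) hp
    (Equiv.Perm.commutatorElement_apply_eq_self hgb₁ (hvfix hhb₁))
    (Equiv.Perm.commutatorElement_apply_eq_self hgb₂ (hvfix hhb₂))
  refine ⟨⁅g, v⁆, hfG, c, d, hC, hpqC, hC.Icc_subset_of_eventually_apply_eq hf hCB ?_ ?_⟩
  · exact (hG g hg).eventually_commutator_apply_eq_nhdsGT (hG v hvG) hgb₁ (hvfix hhb₁)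
  · exact (hG g hg).eventually_commutator_apply_eq_nhdsLT (hG v hvG) hgb₂ (hvfix hhb₂)

end NestedOrbitals

section Towers

variable {G H : Subgroup (Equiv.Perm ℝ)} {T : Set (Set ℝ × Equiv.Perm ℝ)} {n : ℕ}

theorem IsTower.mono (hT : IsTower H T) (hHG : H ≤ G) : IsTower G T :=
  ⟨fun p hp ↦ ⟨hHG (hT.1 p hp).1, (hT.1 p hp).2⟩, hT.2.1, hT.2.2⟩

theorem IsTower.subset (hT : IsTower G T) {S : Set (Set ℝ × Equiv.Perm ℝ)} (hST : S ⊆ T) :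
    IsTower G S :=
  ⟨fun p hp ↦ hT.1 p (hST hp), fun p hp q hq ↦ hT.2.1 p (hST hp) q (hST hq),
    fun p hp q hq ↦ hT.2.2 p (hST hp) q (hST hq)⟩

theorem IsTower.insert (hT : IsTower G T) {g : Equiv.Perm ℝ} {C : Set ℝ} (hg : g ∈ G)
    (hC : IsOrbital g C) (hTC : ∀ t ∈ T, t.1 ⊂ C) : IsTower G (insert (C, g) T) := by
  refine ⟨?_, ?_, ?_⟩
  · rintro p (rfl | hp)
    exacts [⟨hg, hC⟩, hT.1 p hp]
  · rintro p (rfl | hp) q (rfl | hq)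
    exacts [Or.inl subset_rfl, Or.inr (hTC q hq).1, Or.inl (hTC p hp).1, hT.2.1 p hp q hq]
  · rintro p (rfl | hp) q (rfl | hq) h
    exacts [rfl, ((hTC q hq).ne h.symm).elim, ((hTC p hp).ne h).elim, hT.2.2 p hp q hq h]

theorem IsTower.exists_top (hT : IsTower G T) (hfin : T.Finite) (hne : T.Nonempty) :
    ∃ t₀ ∈ T, ∀ t ∈ T, t.1 ⊆ t₀.1 := by
  obtain ⟨t₀, ht₀, hmax⟩ := hfin.exists_maximalFor Prod.fst T hne
  exact ⟨t₀, ht₀, fun t ht ↦ (hT.2.1 t ht t₀ ht₀).elim id (hmax ht)⟩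

theorem ssubset_Ioo_of_subset_Icc {s : Set ℝ} {p q c d : ℝ} (hcd : c < d) (hs : s ⊆ Icc p q)
    (hpq : Icc p q ⊆ Ioo c d) : s ⊂ Ioo c d := by
  refine (hs.trans hpq).ssubset_of_ne fun h ↦ ?_
  have : Icc c d ⊆ Icc p q := closure_Ioo hcd.ne ▸ closure_minimal (h ▸ hs) isClosed_Icc
  exact lt_irrefl c (hpq (this (left_mem_Icc.2 hcd.le))).1

theorem exists_isOrbital_superset_of_mem_commutator (hG : ∀ g ∈ G, PLHomeo g)
    {f : Equiv.Perm ℝ} {a₁ a₂ : ℝ} (hf : f ∈ ⁅G, G⁆) (hA : IsOrbital f (Ioo a₁ a₂)) :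
    ∃ v ∈ G, ∃ c d, IsOrbital v (Ioo c d) ∧ Icc a₁ a₂ ⊆ Ioo c d := by
  have hG' : ∀ g ∈ G, Homeo01 g := fun g hg ↦ (hG g hg).1
  have hfG := Subgroup.commutator_le_self G hf
  obtain ⟨ha, -, -, hAmove⟩ := (isOrbital_Ioo_iff (hG' f hfG)).1 hA
  obtain ⟨z, hz⟩ := nonempty_Ioo.2 ha
  have hzG : z ∈ GSupp G := ⟨f, hfG, hAmove z hz⟩
  obtain ⟨k₁, k₂, hK, hk₁, hk₂⟩ := (isOpen_gSupp hG').exists_connectedComponentIn_eq_Ioo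
    (bddBelow_Ioo.mono (gSupp_subset hG')) (bddAbove_Ioo.mono (gSupp_subset hG')) hzG
  have hfix₁ : ∀ g ∈ G, g k₁ = k₁ := fun g hg ↦ not_not.1 fun h ↦ hk₁ ⟨g, hg, h⟩
  have hfix₂ : ∀ g ∈ G, g k₂ = k₂ := fun g hg ↦ not_not.1 fun h ↦ hk₂ ⟨g, hg, h⟩
  have hAK : Icc a₁ a₂ ⊆ Ioo k₁ k₂ := hA.Icc_subset_of_eventually_apply_eq (hG' f hfG)
    (hA.Ioo_subset_of_apply_eq (hG' f hfG) hz (hK ▸ mem_connectedComponentIn hzG)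
      (hfix₁ f hfG) (hfix₂ f hfG))
    (commutator_le_eventuallyFixing_nhdsGT hG hfix₁ hf)
    (commutator_le_eventuallyFixing_nhdsLT hG hfix₂ hf)
  obtain ⟨v, hv, hav⟩ := IsGroupOrbital.exists_lt_apply hG' ⟨z, hzG, hK.symm⟩
    (hAK (left_mem_Icc.2 ha.le)) (hAK (right_mem_Icc.2 ha.le))
  have hsupp : Icc a₁ a₂ ⊆ Supp v := fun x hx ↦
    (hx.2.trans_lt (hav.trans_le ((hG' v hv).1.monotone hx.1))).ne'
  obtain ⟨c, d, hC, hAC⟩ := exists_isOrbital_Ioo_superset (hG' v hv) isPreconnected_Icc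
    (left_mem_Icc.2 ha.le) hsupp
  exact ⟨v, hv, c, d, hC, hAC⟩

theorem ncard_le_of_isTower_commutator (hG : ∀ g ∈ G, PLHomeo g)
    (hd : ∀ T, IsTower G T → T.Finite ∧ T.ncard ≤ n) (hT : IsTower ⁅G, G⁆ T) :
    T.ncard ≤ n - 1 := by
  have hTG := hT.mono (Subgroup.commutator_le_self G)
  obtain ⟨hfin, hle⟩ := hd T hTG
  by_contra! hlt
  -- the top orbital `A` of `T` lies strictly inside an orbital of `G`, which extends `T`
  obtain ⟨⟨A, f⟩, ht₀, htop⟩ := hT.exists_top hfin (nonempty_of_ncard_ne_zero (by omega))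
  obtain ⟨hf, hA⟩ := hT.1 _ ht₀
  obtain ⟨a₁, a₂, rfl⟩ := hA.exists_eq_Ioo (hG f (Subgroup.commutator_le_self G hf)).1
  obtain ⟨v, hv, c, d, hC, hAC⟩ := exists_isOrbital_superset_of_mem_commutator hG hf hA
  have hTC : ∀ t ∈ T, t.1 ⊂ Ioo c d := fun t ht ↦
    ssubset_Ioo_of_subset_Icc ((isOrbital_Ioo_iff (hG v hv).1).1 hC).1
      ((htop t ht).trans Ioo_subset_Icc_self) hAC
  have := (hd _ (hTG.insert hv hC hTC)).2
  rw [ncard_insert_of_notMem (fun h ↦ (hTC _ h).ne rfl) hfin] at this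
  omega

-- `Icc p q` is a compact interval containing all of `S`, around which the next commutator orbital
-- is built.
theorem exists_isTower_commutator (hG : ∀ g ∈ G, PLHomeo g)
    (hn : ∀ T, IsTower G T → T.ncard ≤ n) (k : ℕ) :
    ∀ T, IsTower G T → T.Finite → T.ncard = k + 1 →
      ∃ S, IsTower ⁅G, G⁆ S ∧ S.Finite ∧ S.ncard = k ∧
        ∃ t ∈ T, ∃ p q, p ≤ q ∧ Icc p q ⊆ t.1 ∧ ∀ s ∈ S, s.1 ⊆ Icc p q := by
  induction k with
  | zero =>
    intro T hT _ hcard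
    obtain ⟨t, rfl⟩ := ncard_eq_one.1 hcard
    obtain ⟨x, hx, hxt⟩ := (hT.1 t rfl).2
    refine ⟨∅, ⟨fun _ h ↦ h.elim, fun _ h ↦ h.elim, fun _ h ↦ h.elim⟩, finite_empty,
      ncard_empty _, t, rfl, x, x, le_rfl, ?_, by simp⟩
    simpa [hxt] using mem_connectedComponentIn hx
  | succ k ih =>
    intro T hT hfin hcard
    obtain ⟨t₀, ht₀, htop⟩ := hT.exists_top hfin (nonempty_of_ncard_ne_zero (by omega))
    obtain ⟨hh, hB⟩ := hT.1 t₀ ht₀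
    obtain ⟨b₁, b₂, hB'⟩ := hB.exists_eq_Ioo (hG _ hh).1
    obtain ⟨S, hS, hSfin, hScard, t, ⟨ht, htt₀⟩, p, q, hpq, hpqt, hSpq⟩ :=
      ih (T \ {t₀}) (hT.subset sdiff_subset) hfin.sdiff
        (by rw [ncard_sdiff_singleton_of_mem ht₀]; omega)
    obtain ⟨hg, hA⟩ := hT.1 t ht
    obtain ⟨f, hf, c, d, hC, hpqC, hcdB⟩ := exists_commutator_isOrbital_between hG hn hg hh hA
      (hB' ▸ hB) (hB' ▸ htop t ht) (fun h ↦ htt₀ (hT.2.2 t ht t₀ ht₀ (h.trans hB'.symm)))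
      hpq hpqt
    have hcd := ((isOrbital_Ioo_iff (hG f (Subgroup.commutator_le_self G hf)).1).1 hC).1
    have hSC : ∀ s ∈ S, s.1 ⊂ Ioo c d := fun s hs ↦ ssubset_Ioo_of_subset_Icc hcd (hSpq s hs) hpqC
    refine ⟨insert (Ioo c d, f) S, hS.insert hf hC hSC, hSfin.insert _,
      by rw [ncard_insert_of_notMem (fun h ↦ (hSC _ h).ne rfl) hSfin, hScard], t₀, ht₀, c, d,
      hcd.le, hB' ▸ hcdB, ?_⟩
    rintro s (rfl | hs)
    exacts [Ioo_subset_Icc_self, (hSC s hs).1.trans Ioo_subset_Icc_self]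

end Towers

theorem stmt11 (G : Subgroup (Equiv.Perm ℝ)) (hG : ∀ g ∈ G, PLHomeo g) (n : ℕ)
    (hn : 0 < n) (hd : DepthEq G n) : DepthEq ⁅G, G⁆ (n - 1) := by
  obtain ⟨T, hT, hfin, hcard⟩ := hd.1
  obtain ⟨S, hS, hSfin, hScard, -⟩ :=
    exists_isTower_commutator hG (fun T hT ↦ (hd.2 T hT).2) (n - 1) T hT hfin (by omega)
  refine ⟨⟨S, hS, hSfin, hScard⟩, fun T hT ↦ ⟨?_, ncard_le_of_isTower_commutator hG hd.2 hT⟩⟩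
  exact (hd.2 T (hT.mono (Subgroup.commutator_le_self G))).1
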